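/- Let G be a finite simple graph. Then th_⌊Z⌋(G) = min{ th_Z(H) : H is a spanning supergraph of G }. -/

import Mathlib

open SimpleGraph

namespace ZFT

variable {V : Type*} {α : Type*} {β : Type*}

/-! ### Standard zero forcing (simultaneous propagation) -/

/-- One round of simultaneous standard zero forcing: a blue vertex forces its
unique white neighbor. -/
def zStep (G : SimpleGraph V) (S : Set V) : Set V :=
  S ∪ {w | ∃ u ∈ S, G.Adj u w ∧ ∀ x, G.Adj u x → x ∉ S → x = w}

/-- `B` is a standard zero forcing set of `G`. -/
def IsZeroForcingSet (G : SimpleGraph V) (B : Set V) : Prop :=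
  ∃ t : ℕ, (zStep G)^[t] B = Set.univ

/-- The standard propagation time `pt_Z(G;B)` (`⊤` if `B` is not a zero forcing set). -/
noncomputable def ptZ (G : SimpleGraph V) (B : Set V) : ℕ∞ :=
  sInf {n : ℕ∞ | ∃ t : ℕ, n = t ∧ (zStep G)^[t] B = Set.univ}

/-- The standard throttling number `th_Z(G;B) = |B| + pt_Z(G;B)`. -/
noncomputable def thZ (G : SimpleGraph V) (B : Set V) : ℕ∞ :=
  (B.ncard : ℕ∞) + ptZ G B

/-- The standard throttling number `th_Z(G)`. -/
noncomputable def thZgraph (G : SimpleGraph V) : ℕ∞ :=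
  sInf {n : ℕ∞ | ∃ B : Set V, IsZeroForcingSet G B ∧ n = thZ G B}

/-- The standard zero forcing number `Z(G)`. -/
noncomputable def Znum (G : SimpleGraph V) : ℕ :=
  sInf {k : ℕ | ∃ B : Set V, IsZeroForcingSet G B ∧ B.ncard = k}

/-- The standard propagation time `pt_Z(G)`, minimized over minimum zero forcing sets. -/
noncomputable def ptZgraph (G : SimpleGraph V) : ℕ∞ :=
  sInf {n : ℕ∞ | ∃ B : Set V, IsZeroForcingSet G B ∧ B.ncard = Znum G ∧ n = ptZ G B}

/-! ### Sets of standard forces -/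

/-- Validity of a single standard force `u → w` when `blue` is the blue set. -/
def zForceValid (G : SimpleGraph V) (blue : Set V) (u w : V) : Prop :=
  u ∈ blue ∧ w ∉ blue ∧ G.Adj u w ∧ ∀ x, G.Adj u x → x ∉ blue → x = w

/-- Validity of a chronological list of standard forces starting from a blue set. -/
def zValidList (G : SimpleGraph V) : Set V → List (V × V) → Prop
  | _, [] => True
  | blue, p :: L => zForceValid G blue p.1 p.2 ∧ zValidList G (insert p.2 blue) L

/-- The blue set after performing all forces in a list, starting from `B`. -/
def endBlue (B : Set V) (L : List (V × V)) : Set V :=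
  B ∪ {w | ∃ u, (u, w) ∈ L}

/-- The set of vertices that have performed a force in a list. -/
def endForced (L : List (V × V)) : Set V := {u | ∃ w, (u, w) ∈ L}

/-- `F` is a set of standard forces of `B` in `G` (recorded from a maximal
chronological list of forces). -/
def IsZForceSet (G : SimpleGraph V) (B : Set V) (F : Set (V × V)) : Prop :=
  ∃ L : List (V × V), zValidList G B L ∧
    (∀ u w, ¬ zForceValid G (endBlue B L) u w) ∧ F = {p | p ∈ L}

/-- The set of blue vertices at time `t` when the forces of `F` are performed at the
earliest possible time steps, starting from `B` blue. -/
def zBlueAt (G : SimpleGraph V) (F : Set (V × V)) (B : Set V) : ℕ → Set V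
  | 0 => B
  | t + 1 =>
      zBlueAt G F B t ∪ {w | ∃ v, (v, w) ∈ F ∧ zForceValid G (zBlueAt G F B t) v w}

/-- The standard propagation time `pt_Z(G;F)` of a set of forces `F` of `B`. -/
noncomputable def ptZofF (G : SimpleGraph V) (F : Set (V × V)) (B : Set V) : ℕ∞ :=
  sInf {n : ℕ∞ | ∃ t : ℕ, n = t ∧ zBlueAt G F B t = Set.univ}

/-! ### `⌊Z⌋` (minor monotone floor) forcing -/

/-- Validity of a single `⌊Z⌋` force `u → w`: `u` is blue and has not yet forced, `w`
is white, and either `w` is the unique white neighbor of `u`, or all neighbors of `u`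
are blue (a hop). -/
def zfForceValid (G : SimpleGraph V) (blue forced : Set V) (u w : V) : Prop :=
  u ∈ blue ∧ w ∉ blue ∧ u ∉ forced ∧
    ((G.Adj u w ∧ ∀ x, G.Adj u x → x ∉ blue → x = w) ∨ ∀ x, G.Adj u x → x ∈ blue)

/-- Validity of a chronological list of `⌊Z⌋` forces. -/
def zfValidList (G : SimpleGraph V) : Set V → Set V → List (V × V) → Prop
  | _, _, [] => True
  | blue, forced, p :: L =>
      zfForceValid G blue forced p.1 p.2 ∧
        zfValidList G (insert p.2 blue) (insert p.1 forced) L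

/-- `F` is a set of `⌊Z⌋` forces of `B` in `G` (recorded from a maximal chronological
list of `⌊Z⌋` forces starting with `B` blue). -/
def IsZFForceSet (G : SimpleGraph V) (B : Set V) (F : Set (V × V)) : Prop :=
  ∃ L : List (V × V), zfValidList G B ∅ L ∧
    (∀ u w, ¬ zfForceValid G (endBlue B L) (endForced L) u w) ∧ F = {p | p ∈ L}

/-- The set of blue vertices at time `t` when the `⌊Z⌋` forces of `F` are performed at
the earliest possible time steps, starting from `B` blue. -/
def zfBlueAt (G : SimpleGraph V) (F : Set (V × V)) (B : Set V) : ℕ → Set V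
  | 0 => B
  | t + 1 =>
      zfBlueAt G F B t ∪
        {w | ∃ v, (v, w) ∈ F ∧ v ∈ zfBlueAt G F B t ∧ w ∉ zfBlueAt G F B t ∧
          (∀ w', (v, w') ∈ F → w' ∈ zfBlueAt G F B t → w' ∈ B) ∧
          ((G.Adj v w ∧ ∀ x, G.Adj v x → x ∉ zfBlueAt G F B t → x = w) ∨
            ∀ x, G.Adj v x → x ∈ zfBlueAt G F B t)}

/-- The `⌊Z⌋` propagation time `pt_⌊Z⌋(G;F)` of a set of `⌊Z⌋` forces `F` of `B`. -/
noncomputable def ptZFofF (G : SimpleGraph V) (F : Set (V × V)) (B : Set V) : ℕ∞ :=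
  sInf {n : ℕ∞ | ∃ t : ℕ, n = t ∧ zfBlueAt G F B t = Set.univ}

/-- The `⌊Z⌋` propagation time `pt_⌊Z⌋(G;B)`, minimized over sets of `⌊Z⌋` forces of `B`. -/
noncomputable def ptZF (G : SimpleGraph V) (B : Set V) : ℕ∞ :=
  sInf {n : ℕ∞ | ∃ F : Set (V × V), IsZFForceSet G B F ∧ n = ptZFofF G F B}

/-- The `⌊Z⌋` throttling number `th_⌊Z⌋(G;B) = |B| + pt_⌊Z⌋(G;B)`. -/
noncomputable def thZF (G : SimpleGraph V) (B : Set V) : ℕ∞ :=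
  (B.ncard : ℕ∞) + ptZF G B

/-- The `⌊Z⌋` throttling number `th_⌊Z⌋(G)`, minimized over all `B ⊆ V(G)`. -/
noncomputable def thZFgraph (G : SimpleGraph V) : ℕ∞ :=
  sInf {n : ℕ∞ | ∃ B : Set V, n = thZF G B}

/-- `B` is a `⌊Z⌋` forcing set of `G`. -/
def IsZFForcingSet (G : SimpleGraph V) (B : Set V) : Prop :=
  ∃ F : Set (V × V), IsZFForceSet G B F ∧ B ∪ {w | ∃ u, (u, w) ∈ F} = Set.univ

/-- The `⌊Z⌋` forcing number `⌊Z⌋(G)`. -/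
noncomputable def ZFnum (G : SimpleGraph V) : ℕ :=
  sInf {k : ℕ | ∃ B : Set V, IsZFForcingSet G B ∧ B.ncard = k}

/-- The `⌊Z⌋` propagation time `pt_⌊Z⌋(G)`, minimized over minimum `⌊Z⌋` forcing sets. -/
noncomputable def ptZFgraph (G : SimpleGraph V) : ℕ∞ :=
  sInf {n : ℕ∞ | ∃ B : Set V, IsZFForcingSet G B ∧ B.ncard = ZFnum G ∧ n = ptZF G B}

/-! ### Contractions, minors, and products -/

/-- The graph obtained from `H` by contracting (all) the edges in `C`: its vertices are
the connected components of the spanning subgraph of `H` with edge set `C ∩ E(H)`, and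
two distinct components are adjacent iff `H` has an edge between them. -/
def contractEdges (H : SimpleGraph α) (C : Set (Sym2 α)) :
    SimpleGraph (SimpleGraph.fromEdgeSet C ⊓ H).ConnectedComponent where
  Adj c d := c ≠ d ∧ ∃ a b, H.Adj a b ∧
      (SimpleGraph.fromEdgeSet C ⊓ H).connectedComponentMk a = c ∧
      (SimpleGraph.fromEdgeSet C ⊓ H).connectedComponentMk b = d
  symm := ⟨by
    rintro c d ⟨hcd, a, b, hab, ha, hb⟩
    exact ⟨hcd.symm, b, a, hab.symm, hb, ha⟩⟩
  loopless := ⟨fun c h => h.1 rfl⟩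

/-- `G` is a minor of `H`: `G` is isomorphic to a subgraph of a graph obtained from an
induced subgraph of `H` by contracting a set of edges. -/
def IsMinor (G : SimpleGraph β) (H : SimpleGraph α) : Prop :=
  ∃ (s : Set α) (C : Set (Sym2 s))
    (G'' : SimpleGraph (SimpleGraph.fromEdgeSet C ⊓ H.induce s).ConnectedComponent),
      G'' ≤ contractEdges (H.induce s) C ∧ Nonempty (G ≃g G'')

/-- The Cartesian product `K_a □ P_{b+1}`. -/
def prodKP (a b : ℕ) : SimpleGraph (Fin a × Fin (b + 1)) :=
  (⊤ : SimpleGraph (Fin a)) □ SimpleGraph.pathGraph (b + 1)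

/-- The path edges of `K_a □ P_{b+1}` (edges within the copies of `P_{b+1}`). -/
def pathEdges (a b : ℕ) : Set (Sym2 (Fin a × Fin (b + 1))) :=
  {e | ∃ (i : Fin a) (j j' : Fin (b + 1)),
    (SimpleGraph.pathGraph (b + 1)).Adj j j' ∧ e = s((i, j), (i, j'))}

/-- The complete edges of `K_a □ P_{b+1}` (edges within the copies of `K_a`). -/
def completeEdges (a b : ℕ) : Set (Sym2 (Fin a × Fin (b + 1))) :=
  {e | ∃ (i i' : Fin a) (j : Fin (b + 1)), i ≠ i' ∧ e = s((i, j), (i', j))}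

/-- The star `K_{1,n-1}` on `n` vertices: vertex `0` is adjacent to all others. -/
def starGraph (n : ℕ) : SimpleGraph (Fin n) where
  Adj i j := i ≠ j ∧ ((i : ℕ) = 0 ∨ (j : ℕ) = 0)
  symm := ⟨by rintro i j ⟨h1, h2⟩; exact ⟨h1.symm, h2.symm⟩⟩
  loopless := ⟨fun i h => h.1 rfl⟩

/-- The independence number `α(G)`. -/
noncomputable def indepNum (G : SimpleGraph V) : ℕ :=
  sSup {k : ℕ | ∃ s : Set V, (∀ a ∈ s, ∀ b ∈ s, a ≠ b → ¬ G.Adj a b) ∧ s.ncard = k}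

/-!
A standard force `u → w` in a spanning supergraph `H` of `G` is, read in `G`, either a force
(if `uw ∈ E(G)`) or a hop, and no vertex forces twice. So performing each round of standard
forcing in `H` one force at a time gives a set of `⌊Z⌋` forces of `G` that is no slower.
Conversely, adding to `G` an edge for each force of a set of `⌊Z⌋` forces turns every
`⌊Z⌋` force into a standard force of the same round.
-/

lemma sInf_mem_of_ne_top {s : Set ℕ∞} (h : sInf s ≠ ⊤) : sInf s ∈ s :=
  csInf_mem (Set.nonempty_iff_ne_empty.2 fun hs => h (by rw [hs, sInf_empty]))

section Lists

variable {G H : SimpleGraph V}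

lemma endBlue_nil (B : Set V) : endBlue B [] = B := by
  simp [endBlue]

lemma endBlue_cons (B : Set V) (p : V × V) (L : List (V × V)) :
    endBlue B (p :: L) = endBlue (insert p.2 B) L := by
  ext x
  simp only [endBlue, Set.mem_union, Set.mem_insert_iff, Set.mem_ofPred_eq, List.mem_cons]
  grind

lemma endBlue_append (B : Set V) (L₁ L₂ : List (V × V)) :
    endBlue B (L₁ ++ L₂) = endBlue (endBlue B L₁) L₂ := by
  induction L₁ generalizing B with
  | nil => rw [List.nil_append, endBlue_nil]
  | cons p L₁ ih => rw [List.cons_append, endBlue_cons, endBlue_cons, ih]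

lemma zValidList_append {B : Set V} {L₁ L₂ : List (V × V)} (h₁ : zValidList G B L₁)
    (h₂ : zValidList G (endBlue B L₁) L₂) : zValidList G B (L₁ ++ L₂) := by
  induction L₁ generalizing B with
  | nil => rwa [endBlue_nil] at h₂
  | cons p L₁ ih => exact ⟨h₁.1, ih h₁.2 (by rwa [endBlue_cons] at h₂)⟩

lemma zValidList_of_forall_zForceValid {blue : Set V} {L : List (V × V)}
    (hnd : (L.map Prod.snd).Nodup) (hL : ∀ p ∈ L, zForceValid G blue p.1 p.2) :
    zValidList G blue L := by
  induction L generalizing blue with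
  | nil => trivial
  | cons q L ih =>
    rw [List.map_cons, List.nodup_cons] at hnd
    refine ⟨hL q List.mem_cons_self, ih hnd.2 fun p hp => ?_⟩
    obtain ⟨hu, hw, hadj, huniq⟩ := hL p (List.mem_cons_of_mem q hp)
    have hpq : p.2 ≠ q.2 := fun h => hnd.1 (h ▸ List.mem_map_of_mem hp)
    exact ⟨Set.mem_insert_of_mem _ hu, by simp [hpq, hw], hadj,
      fun x hx hxb => huniq x hx fun h => hxb (Set.mem_insert_of_mem _ h)⟩

/-- A standard force in a supergraph is, in `G`, a force or a hop. -/
lemma zForceValid.adj_or_hop (hGH : G ≤ H) {blue blue' : Set V} {u w : V}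
    (h : zForceValid H blue u w) (hsub : blue ⊆ blue') :
    (G.Adj u w ∧ ∀ x, G.Adj u x → x ∉ blue' → x = w) ∨ ∀ x, G.Adj u x → x ∈ blue' := by
  by_cases huw : G.Adj u w
  · exact Or.inl ⟨huw, fun x hx hxb => h.2.2.2 x (hGH hx) fun h => hxb (hsub h)⟩
  · refine Or.inr fun x hx => ?_
    by_contra hxb
    exact huw (h.2.2.2 x (hGH hx) (fun h => hxb (hsub h)) ▸ hx)

/-- A vertex never forces twice in the standard process: after forcing, all its
neighbours are blue. -/
lemma zfValidList_of_zValidList (hGH : G ≤ H) {blue forced : Set V} {L : List (V × V)}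
    (hL : zValidList H blue L) (hforced : ∀ u ∈ forced, ∀ x, H.Adj u x → x ∈ blue) :
    zfValidList G blue forced L := by
  induction L generalizing blue forced with
  | nil => trivial
  | cons p L ih =>
    obtain ⟨hp, hL⟩ := hL
    refine ⟨⟨hp.1, hp.2.1, fun hpf => hp.2.1 (hforced _ hpf _ hp.2.2.1),
      hp.adj_or_hop hGH subset_rfl⟩, ih hL ?_⟩
    rintro u (rfl | hu) x hx
    · by_cases hxb : x ∈ blue
      · exact Set.mem_insert_of_mem _ hxb
      · exact hp.2.2.2 x hx hxb ▸ Set.mem_insert _ _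
    · exact Set.mem_insert_of_mem _ (hforced u hu x hx)

lemma zfValidList.notMem_of_mem {blue forced : Set V} {L : List (V × V)}
    (hL : zfValidList G blue forced L) {p : V × V} (hp : p ∈ L) :
    p.2 ∉ blue ∧ p.1 ∉ forced := by
  induction L generalizing blue forced with
  | nil => simp at hp
  | cons q L ih =>
    rcases List.mem_cons.1 hp with rfl | hp
    · exact ⟨hL.1.2.1, hL.1.2.2.1⟩
    · obtain ⟨h₁, h₂⟩ := ih hL.2 hp
      exact ⟨fun h => h₁ (Set.mem_insert_of_mem _ h), fun h => h₂ (Set.mem_insert_of_mem _ h)⟩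

lemma zfValidList.nodup_map_fst {blue forced : Set V} {L : List (V × V)}
    (hL : zfValidList G blue forced L) : (L.map Prod.fst).Nodup := by
  induction L generalizing blue forced with
  | nil => exact List.nodup_nil
  | cons q L ih =>
    refine List.nodup_cons.2 ⟨fun hq => ?_, ih hL.2⟩
    obtain ⟨p, hp, hpq⟩ := List.mem_map.1 hq
    exact (hL.2.notMem_of_mem hp).2 (hpq ▸ Set.mem_insert _ _)

lemma zfValidList.nodup_map_snd {blue forced : Set V} {L : List (V × V)}
    (hL : zfValidList G blue forced L) : (L.map Prod.snd).Nodup := by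
  induction L generalizing blue forced with
  | nil => exact List.nodup_nil
  | cons q L ih =>
    refine List.nodup_cons.2 ⟨fun hq => ?_, ih hL.2⟩
    obtain ⟨p, hp, hpq⟩ := List.mem_map.1 hq
    exact (hL.2.notMem_of_mem hp).1 (hpq ▸ Set.mem_insert _ _)

lemma zfValidList.fst_inj {blue forced : Set V} {L : List (V × V)}
    (hL : zfValidList G blue forced L) {u w w' : V} (h : (u, w) ∈ L) (h' : (u, w') ∈ L) :
    w = w' :=
  congrArg Prod.snd (List.inj_on_of_nodup_map hL.nodup_map_fst h h' rfl)

lemma zfValidList.snd_inj {blue forced : Set V} {L : List (V × V)}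
    (hL : zfValidList G blue forced L) {u u' w : V} (h : (u, w) ∈ L) (h' : (u', w) ∈ L) :
    u = u' :=
  congrArg Prod.fst (List.inj_on_of_nodup_map hL.nodup_map_snd h h' rfl)

end Lists

lemma exists_zValidList_zStep [Finite V] (H : SimpleGraph V) (S : Set V) :
    ∃ R : List (V × V), zValidList H S R ∧ endBlue S R = zStep H S ∧
      ∀ w ∈ zStep H S \ S, ∃ v, (v, w) ∈ R ∧ zForceValid H S v w := by
  have hforcer : ∀ w, ∃ v, w ∈ zStep H S \ S → zForceValid H S v w := by
    intro w
    by_cases hw : w ∈ zStep H S \ S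
    · obtain ⟨hw, hwS⟩ := hw
      rcases hw with hwS' | ⟨v, hv, hadj, huniq⟩
      · exact absurd hwS' hwS
      · exact ⟨v, fun _ => ⟨hv, hwS, hadj, huniq⟩⟩
    · exact ⟨w, fun h => absurd h hw⟩
  choose f hf using hforcer
  set l := (zStep H S \ S).toFinite.toFinset.toList
  have hl : ∀ w, w ∈ l ↔ w ∈ zStep H S \ S := by simp [l]
  refine ⟨l.map fun w => (f w, w), ?_, ?_, fun w hw => ⟨f w, ?_, hf w hw⟩⟩
  · refine zValidList_of_forall_zForceValid ?_ ?_
    · simpa [List.map_map, Function.comp_def, l] using Finset.nodup_toList _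
    · simp only [List.mem_map]
      rintro _ ⟨w, hw, rfl⟩
      exact hf w ((hl w).1 hw)
  · have htargets : {w | ∃ u, (u, w) ∈ l.map fun w => (f w, w)} = zStep H S \ S := by
      ext w; simp [hl]
    rw [endBlue, htargets]
    exact Set.union_sdiff_cancel (Set.subset_union_left : S ⊆ zStep H S)
  · exact List.mem_map.2 ⟨w, (hl w).2 hw, rfl⟩

lemma exists_zValidList_iterate_zStep [Finite V] (H : SimpleGraph V) (B : Set V) (t : ℕ) :
    ∃ L : List (V × V), zValidList H B L ∧ endBlue B L = (zStep H)^[t] B ∧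
      ∀ r < t, ∀ w ∈ (zStep H)^[r + 1] B \ (zStep H)^[r] B,
        ∃ v, (v, w) ∈ L ∧ zForceValid H ((zStep H)^[r] B) v w := by
  induction t with
  | zero => exact ⟨[], trivial, endBlue_nil B, by simp⟩
  | succ t ih =>
    obtain ⟨L, hL, hend, hwit⟩ := ih
    obtain ⟨R, hR, hendR, hwitR⟩ := exists_zValidList_zStep H ((zStep H)^[t] B)
    refine ⟨L ++ R, zValidList_append hL (hend ▸ hR), ?_, fun r hr w hw => ?_⟩
    · rw [endBlue_append, hend, hendR, Function.iterate_succ_apply']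
    · rcases Nat.lt_succ_iff_lt_or_eq.1 hr with hr | rfl
      · obtain ⟨v, hv, hvw⟩ := hwit r hr w hw
        exact ⟨v, List.mem_append_left R hv, hvw⟩
      · rw [Function.iterate_succ_apply'] at hw
        obtain ⟨v, hv, hvw⟩ := hwitR w hw
        exact ⟨v, List.mem_append_right L hv, hvw⟩

section Schedules

variable {G H : SimpleGraph V} {F : Set (V × V)} {B : Set V}

lemma zfBlueAt_subset_succ (t : ℕ) : zfBlueAt G F B t ⊆ zfBlueAt G F B (t + 1) :=
  Set.subset_union_left

lemma iterate_zStep_subset_zfBlueAt (hGH : G ≤ H)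
    (hfst : ∀ {u w w'}, (u, w) ∈ F → (u, w') ∈ F → w = w') {t : ℕ}
    (hwit : ∀ r < t, ∀ w ∈ (zStep H)^[r + 1] B \ (zStep H)^[r] B,
      ∃ v, (v, w) ∈ F ∧ zForceValid H ((zStep H)^[r] B) v w) :
    ∀ s ≤ t, (zStep H)^[s] B ⊆ zfBlueAt G F B s := by
  intro s
  induction s with
  | zero => exact fun _ => subset_rfl
  | succ s ih =>
    intro hst w hw
    have ih := ih (Nat.le_of_succ_le hst)
    by_cases hwb : w ∈ zfBlueAt G F B s
    · exact zfBlueAt_subset_succ s hwb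
    by_cases hws : w ∈ (zStep H)^[s] B
    · exact absurd (ih hws) hwb
    obtain ⟨v, hvF, hvw⟩ := hwit s hst w ⟨hw, hws⟩
    exact Or.inr ⟨v, hvF, ih hvw.1, hwb, fun w' hw' hw'b => absurd (hfst hw' hvF ▸ hw'b) hwb,
      hvw.adj_or_hop hGH ih⟩

def supForces (G : SimpleGraph V) (F : Set (V × V)) : SimpleGraph V :=
  G ⊔ SimpleGraph.fromEdgeSet (Function.uncurry Sym2.mk '' F)

lemma IsZFForceSet.snd_notMem (hF : IsZFForceSet G B F) {u w : V} (h : (u, w) ∈ F) :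
    w ∉ B := by
  obtain ⟨L, hL, -, rfl⟩ := hF
  exact (hL.notMem_of_mem h).1

lemma IsZFForceSet.fst_inj (hF : IsZFForceSet G B F) {u w w' : V} (h : (u, w) ∈ F)
    (h' : (u, w') ∈ F) : w = w' := by
  obtain ⟨L, hL, -, rfl⟩ := hF
  exact hL.fst_inj h h'

lemma IsZFForceSet.snd_inj (hF : IsZFForceSet G B F) {u u' w : V} (h : (u, w) ∈ F)
    (h' : (u', w) ∈ F) : u = u' := by
  obtain ⟨L, hL, -, rfl⟩ := hF
  exact hL.snd_inj h h'

lemma IsZFForceSet.fst_mem_zfBlueAt (hF : IsZFForceSet G B F) {u w : V} (h : (u, w) ∈ F) :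
    ∀ {t}, w ∈ zfBlueAt G F B t → u ∈ zfBlueAt G F B t
  | 0, hw => absurd hw (hF.snd_notMem h)
  | t + 1, Or.inl hw => zfBlueAt_subset_succ t (hF.fst_mem_zfBlueAt h hw)
  | t + 1, Or.inr ⟨_, hu', hu'b, _⟩ => zfBlueAt_subset_succ t (hF.snd_inj h hu' ▸ hu'b)

/-- Each `⌊Z⌋` force `v → w` becomes a standard force in `supForces G F`: the other
neighbours of `v` there are its `G`-neighbours, already blue, and the vertex that
forced `v`, which is blue before `v`. -/
lemma IsZFForceSet.zfBlueAt_subset_iterate_zStep (hF : IsZFForceSet G B F) (t : ℕ) :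
    zfBlueAt G F B t ⊆ (zStep (supForces G F))^[t] B := by
  induction t with
  | zero => exact subset_rfl
  | succ t ih =>
    rw [Function.iterate_succ_apply']
    rintro w (hw | ⟨v, hvF, hvb, hwb, -, hcond⟩)
    · exact Or.inl (ih hw)
    refine Or.inr ⟨v, ih hvb, Or.inr ⟨⟨(v, w), hvF, rfl⟩, fun h => hwb (h ▸ hvb)⟩, ?_⟩
    intro x hx hxS
    have hxb : x ∉ zfBlueAt G F B t := fun h => hxS (ih h)
    rcases hx with hxG | ⟨⟨p, hpF, hpe⟩, -⟩
    · rcases hcond with ⟨-, huniq⟩ | hall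
      exacts [huniq x hxG hxb, absurd (hall x hxG) hxb]
    · rcases Sym2.eq_iff.1 hpe with ⟨rfl, rfl⟩ | ⟨rfl, rfl⟩
      · exact hF.fst_inj hpF hvF
      · exact absurd (hF.fst_mem_zfBlueAt hpF hvb) hxb

end Schedules

section Throttling

variable {G H : SimpleGraph V}

lemma ptZ_le {B : Set V} {t : ℕ} (h : (zStep H)^[t] B = Set.univ) : ptZ H B ≤ t := by
  unfold ptZ
  exact sInf_le ⟨t, rfl, h⟩

lemma ptZF_le {B : Set V} {F : Set (V × V)} (hF : IsZFForceSet G B F) {t : ℕ}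
    (h : zfBlueAt G F B t = Set.univ) : ptZF G B ≤ t := by
  unfold ptZF
  exact le_trans (b := ptZFofF G F B) (sInf_le ⟨F, hF, rfl⟩) (sInf_le ⟨t, rfl, h⟩)

lemma thZgraph_le_thZ {B : Set V} (hB : IsZeroForcingSet H B) : thZgraph H ≤ thZ H B := by
  unfold thZgraph
  exact sInf_le ⟨B, hB, rfl⟩

lemma thZFgraph_le_thZF (B : Set V) : thZFgraph G ≤ thZF G B := by
  unfold thZFgraph
  exact sInf_le ⟨B, rfl⟩

lemma thZF_le_thZ [Finite V] (hGH : G ≤ H) (B : Set V) : thZF G B ≤ thZ H B := by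
  rcases eq_or_ne (ptZ H B) ⊤ with htop | htop
  · simp [thZ, htop]
  obtain ⟨t, hpt, ht⟩ : ∃ t : ℕ, ptZ H B = t ∧ (zStep H)^[t] B = Set.univ :=
    sInf_mem_of_ne_top htop
  obtain ⟨L, hL, hend, hwit⟩ := exists_zValidList_iterate_zStep H B t
  have hLG : zfValidList G B ∅ L := zfValidList_of_zValidList hGH hL (by simp)
  have hend : endBlue B L = Set.univ := hend.trans ht
  have hF : IsZFForceSet G B {p | p ∈ L} :=
    ⟨L, hLG, fun _ _ h => h.2.1 (hend ▸ Set.mem_univ _), rfl⟩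
  have hsched : zfBlueAt G {p | p ∈ L} B t = Set.univ :=
    Set.eq_univ_of_univ_subset <|
      ht ▸ iterate_zStep_subset_zfBlueAt hGH hLG.fst_inj hwit t le_rfl
  calc thZF G B = B.ncard + ptZF G B := rfl
    _ ≤ B.ncard + t := add_le_add le_rfl (ptZF_le hF hsched)
    _ = thZ H B := by rw [thZ, hpt]

lemma exists_le_thZgraph_le_thZF (G : SimpleGraph V) (B : Set V) :
    ∃ H, G ≤ H ∧ thZgraph H ≤ thZF G B := by
  rcases eq_or_ne (ptZF G B) ⊤ with htop | htop
  · exact ⟨G, le_rfl, by simp [thZF, htop]⟩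
  obtain ⟨F, hF, hptF⟩ : ∃ F, IsZFForceSet G B F ∧ ptZF G B = ptZFofF G F B :=
    sInf_mem_of_ne_top htop
  obtain ⟨t, hpt, ht⟩ : ∃ t : ℕ, ptZFofF G F B = t ∧ zfBlueAt G F B t = Set.univ :=
    sInf_mem_of_ne_top (hptF ▸ htop)
  have hH : (zStep (supForces G F))^[t] B = Set.univ :=
    Set.eq_univ_of_univ_subset (ht ▸ hF.zfBlueAt_subset_iterate_zStep t)
  refine ⟨supForces G F, le_sup_left, ?_⟩
  calc thZgraph (supForces G F) ≤ thZ (supForces G F) B := thZgraph_le_thZ ⟨t, hH⟩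
    _ ≤ B.ncard + t := add_le_add le_rfl (ptZ_le hH)
    _ = thZF G B := by rw [thZF, hptF, hpt]

end Throttling

/-- `th_⌊Z⌋(G) = min{ th_Z(H) : H a spanning supergraph of G }`. -/
theorem stmt3 {V : Type*} [Fintype V] (G : SimpleGraph V) :
    thZFgraph G = sInf {n : ℕ∞ | ∃ H : SimpleGraph V, G ≤ H ∧ n = thZgraph H} := by
  refine le_antisymm (le_sInf ?_) (le_sInf ?_)
  · rintro _ ⟨H, hGH, rfl⟩
    refine le_sInf ?_
    rintro _ ⟨B, -, rfl⟩
    exact (thZFgraph_le_thZF B).trans (thZF_le_thZ hGH B)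
  · rintro _ ⟨B, rfl⟩
    obtain ⟨H, hGH, hH⟩ := exists_le_thZgraph_le_thZF G B
    exact le_trans (b := thZgraph H) (sInf_le ⟨H, hGH, rfl⟩) hH

end ZFT
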